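/- Let G be a bipartite graph with parts A and B, and let s ≤ t be positive integers. Suppose G contains no K_{s,t} with the s vertices on the A-side; i.e., every set of s vertices in A has at most t−1 common neighbors in B. Then the number of edges of G is O(t^{1/s} |A| |B|^{(s−1)/s} + |B|). -/
import Mathlib


open scoped Classical

/-- Kővári–Sós–Turán: if every `s` vertices of `A` have at most `t-1` common neighbors in `B`,
then the number of edges is `O(t^{1/s} |A| |B|^{(s-1)/s} + |B|)`. -/
theorem kovari_sos_turan (s : ℕ) (hs : 1 ≤ s) :
    ∃ C > (0:ℝ), ∀ (t : ℕ), s ≤ t →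
      ∀ (α β : Type) (A : Finset α) (B : Finset β) (r : α → β → Prop),
      (∀ S ⊆ A, S.card = s → (B.filter (fun b => ∀ a ∈ S, r a b)).card ≤ t - 1) →
      (∑ a ∈ A, ((B.filter (fun b => r a b)).card : ℝ)) ≤
        C * ((t : ℝ) ^ ((1:ℝ)/s) * (A.card : ℝ) * (B.card : ℝ) ^ (((s:ℝ) - 1)/s) +
          (B.card : ℝ)) := by
  refine ⟨s, by exact_mod_cast Nat.lt_of_lt_of_le Nat.zero_lt_one hs, ?_⟩
  intro t ht α β A B r hK
  have hs0 : (s : ℝ) ≠ 0 := by positivity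
  set n := A.card with hn
  set m := B.card with hm
  set d : β → ℕ := fun b => (A.filter (fun a => r a b)).card with hd
  -- Step 1: double count edges.
  have hE : (∑ a ∈ A, ((B.filter (fun b => r a b)).card : ℝ)) = ∑ b ∈ B, (d b : ℝ) := by
    have : (∑ a ∈ A, (B.filter (fun b => r a b)).card) = ∑ b ∈ B, d b := by
      simp only [hd, Finset.card_filter]
      exact Finset.sum_comm
    exact_mod_cast this
  -- Step 2: count pairs (S, b) with S ⊆ A, |S| = s, b adjacent to all of S.
  have hcount : ∑ b ∈ B, (d b).choose s ≤ (t - 1) * n.choose s := by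
    have h1 : ∀ b, (d b).choose s
        = ((A.powersetCard s).filter (fun S => ∀ a ∈ S, r a b)).card := by
      intro b
      rw [hd]
      rw [← Finset.card_powersetCard]
      congr 1
      ext S
      simp only [Finset.mem_powersetCard, Finset.mem_filter, Finset.subset_iff,
        Finset.mem_filter]
      constructor
      · intro h
        exact ⟨⟨fun x hx => (h.1 hx).1, h.2⟩, fun a ha => (h.1 ha).2⟩
      · intro h
        exact ⟨fun x hx => ⟨h.1.1 hx, h.2 x hx⟩, h.1.2⟩
    calc ∑ b ∈ B, (d b).choose s
        = ∑ b ∈ B, ∑ S ∈ A.powersetCard s, (if ∀ a ∈ S, r a b then 1 else 0) := by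
          simp only [h1, Finset.card_filter]
      _ = ∑ S ∈ A.powersetCard s, (B.filter (fun b => ∀ a ∈ S, r a b)).card := by
          rw [Finset.sum_comm]
          simp only [Finset.card_filter]
      _ ≤ ∑ _S ∈ A.powersetCard s, (t - 1) := by
          apply Finset.sum_le_sum
          intro S hS
          obtain ⟨h1', h2'⟩ := Finset.mem_powersetCard.mp hS
          exact hK S h1' h2'
      _ = (t - 1) * n.choose s := by
          rw [Finset.sum_const, Finset.card_powersetCard, smul_eq_mul, mul_comm]
  -- Step 3: analytic part.
  set f : β → ℝ := fun b => max ((d b : ℝ) - ((s : ℝ) - 1)) 0 with hf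
  have hf0 : ∀ b, 0 ≤ f b := fun b => le_max_right _ _
  have hfs : ∀ b, f b ^ s ≤ (s.factorial : ℝ) * (d b).choose s := by
    intro b
    rcases le_or_gt s (d b + 1) with h | h
    · have hcast : ((d b + 1 - s : ℕ) : ℝ) = (d b : ℝ) + 1 - s := by
        have := Nat.cast_sub (R := ℝ) h
        push_cast at this ⊢
        linarith
      have hfb : f b = ((d b + 1 - s : ℕ) : ℝ) := by
        rw [hf]
        simp only
        rw [max_eq_left, hcast]
        · ring
        · have : (s : ℝ) ≤ (d b : ℝ) + 1 := by exact_mod_cast h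
          linarith
      rw [hfb]
      have hnat : (d b + 1 - s) ^ s ≤ s.factorial * (d b).choose s := by
        have := Nat.pow_sub_le_descFactorial (d b) s
        rwa [Nat.descFactorial_eq_factorial_mul_choose] at this
      exact_mod_cast hnat
    · have hfb : f b = 0 := by
        rw [hf]
        simp only
        rw [max_eq_right]
        have : (d b : ℝ) + 1 < s := by exact_mod_cast h
        linarith
      rw [hfb, zero_pow (by omega)]
      positivity
  set S := ∑ b ∈ B, f b with hSdef
  have hS0 : 0 ≤ S := Finset.sum_nonneg fun b _ => hf0 b
  -- sum of degrees is close to S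
  have hS1 : (∑ b ∈ B, (d b : ℝ)) ≤ S + ((s : ℝ) - 1) * m := by
    have : ∀ b ∈ B, (d b : ℝ) ≤ f b + ((s : ℝ) - 1) := by
      intro b _
      have := le_max_left ((d b : ℝ) - ((s : ℝ) - 1)) 0
      simp only [hf]
      linarith
    calc (∑ b ∈ B, (d b : ℝ)) ≤ ∑ b ∈ B, (f b + ((s : ℝ) - 1)) :=
          Finset.sum_le_sum this
      _ = S + ((s : ℝ) - 1) * m := by
          rw [Finset.sum_add_distrib, Finset.sum_const, ← hm]
          
          ring
  -- power bound on S
  have hS2 : S ^ s ≤ (m : ℝ) ^ (s - 1) * ((t : ℝ) * (n : ℝ) ^ s) := by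
    have hps : S ^ s ≤ (m : ℝ) ^ (s - 1) * ∑ b ∈ B, f b ^ s := by
      have := pow_sum_le_card_mul_sum_pow (s := B) (f := f) (fun b _ => hf0 b) (s - 1)
      rwa [Nat.sub_add_cancel hs, ← hm] at this
    have hsum : (∑ b ∈ B, f b ^ s) ≤ (t : ℝ) * (n : ℝ) ^ s := by
      calc (∑ b ∈ B, f b ^ s) ≤ ∑ b ∈ B, (s.factorial : ℝ) * (d b).choose s :=
            Finset.sum_le_sum fun b _ => hfs b
        _ = (s.factorial : ℝ) * ∑ b ∈ B, ((d b).choose s : ℝ) := by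
            rw [Finset.mul_sum]
        _ ≤ (t : ℝ) * (n : ℝ) ^ s := by
            have hnat : s.factorial * ((t - 1) * n.choose s) ≤ t * n ^ s := by
              calc s.factorial * ((t - 1) * n.choose s)
                  = (t - 1) * (s.factorial * n.choose s) := by ring
                _ = (t - 1) * n.descFactorial s := by
                    rw [Nat.descFactorial_eq_factorial_mul_choose]
                _ ≤ t * n ^ s :=
                    Nat.mul_le_mul (Nat.sub_le t 1) (Nat.descFactorial_le_pow n s)
            have hc : (∑ b ∈ B, ((d b).choose s : ℝ)) ≤ ((t - 1) * n.choose s : ℕ) := by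
              exact_mod_cast hcount
            calc (s.factorial : ℝ) * ∑ b ∈ B, ((d b).choose s : ℝ)
                ≤ (s.factorial : ℝ) * ((t - 1) * n.choose s : ℕ) := by
                  apply mul_le_mul_of_nonneg_left hc (by positivity)
              _ = ((s.factorial * ((t - 1) * n.choose s) : ℕ) : ℝ) := by push_cast; ring
              _ ≤ (t : ℝ) * (n : ℝ) ^ s := by exact_mod_cast hnat
    calc S ^ s ≤ (m : ℝ) ^ (s - 1) * ∑ b ∈ B, f b ^ s := hps
      _ ≤ (m : ℝ) ^ (s - 1) * ((t : ℝ) * (n : ℝ) ^ s) := by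
          apply mul_le_mul_of_nonneg_left hsum (by positivity)
  -- the target quantity
  set Y := (t : ℝ) ^ ((1:ℝ)/s) * (n : ℝ) * (m : ℝ) ^ (((s:ℝ) - 1)/s) with hY
  have hY0 : 0 ≤ Y := by positivity
  have hYs : Y ^ s = (m : ℝ) ^ (s - 1) * ((t : ℝ) * (n : ℝ) ^ s) := by
    rw [hY, mul_pow, mul_pow]
    have h1 : ((t : ℝ) ^ ((1:ℝ)/s)) ^ s = (t : ℝ) := by
      rw [← Real.rpow_natCast ((t : ℝ) ^ ((1:ℝ)/s)) s, ← Real.rpow_mul (by positivity)]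
      rw [one_div, inv_mul_cancel₀ hs0, Real.rpow_one]
    have h2 : ((m : ℝ) ^ (((s:ℝ) - 1)/s)) ^ s = (m : ℝ) ^ (s - 1) := by
      rw [← Real.rpow_natCast ((m : ℝ) ^ (((s:ℝ) - 1)/s)) s, ← Real.rpow_mul (by positivity)]
      rw [div_mul_cancel₀ _ hs0]
      rw [← Real.rpow_natCast (m : ℝ) (s - 1)]
      congr 1
      push_cast [Nat.cast_sub hs]
      ring
    rw [h1, h2]
    ring
  have hSY : S ≤ Y := by
    have : S ^ s ≤ Y ^ s := by rw [hYs]; exact hS2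
    exact le_of_pow_le_pow_left₀ (by omega) hY0 this
  -- finish
  rw [hE]
  have hm0 : (0:ℝ) ≤ m := Nat.cast_nonneg m
  have hs1 : (1:ℝ) ≤ s := by exact_mod_cast hs
  calc (∑ b ∈ B, (d b : ℝ)) ≤ S + ((s : ℝ) - 1) * m := hS1
    _ ≤ Y + ((s : ℝ) - 1) * m := by linarith
    _ ≤ (s : ℝ) * (Y + m) := by nlinarith
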